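/- Let q : [0,L] → ℝ be continuous with q(u) ≥ -K/(m-1) for some K > 0, and let G solve G'' = -qG, G(0) = 0, G'(0) = 1, with G > 0 on (0,L]. Then for all r ∈ (0,L], (m-1) G'(r)/G(r) ≤ (m-1) √(K/(m-1)) coth( √(K/(m-1)) r ). In particular (m-1)G'(r)/G(r) ≤ C(r₀) for r ≥ r₀ > 0 with C(r₀) depending only on K, m, r₀. -/

import Mathlib

/-!
With `α = √(K/(m-1))`, the hypotheses give `G'' = -qG ≤ α²G` wherever `G > 0`.
The Wronskian of `G` against `sinh (α ·)`, namely `W = G' sinh(α·) - α G cosh(α·)`,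
has derivative `(G'' - α²G) sinh(α·) ≤ 0` and vanishes at `0`, so `W ≤ 0` on `[0, L]`;
dividing by `G sinh(α·) > 0` gives `G'/G ≤ α coth(α·)`.
-/

open Real Set

theorem hasDerivAt_sinh_wronskian {G G' : ℝ → ℝ} {G'' α u : ℝ}
    (hG : HasDerivAt G (G' u) u) (hG' : HasDerivAt G' G'' u) :
    HasDerivAt (fun x => G' x * sinh (α * x) - α * G x * cosh (α * x))
      ((G'' - α ^ 2 * G u) * sinh (α * u)) u := by
  have hαx : HasDerivAt (fun x => α * x) α u := by
    simpa using (hasDerivAt_id u).const_mul α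
  have := (hG'.mul hαx.sinh).sub ((hG.const_mul α).mul hαx.cosh)
  exact this.congr_deriv (by ring)

theorem deriv_mul_sinh_le_of_deriv_deriv_le {G : ℝ → ℝ} {α r : ℝ} (hα : 0 ≤ α)
    (hr : 0 ≤ r) (hG : Differentiable ℝ G) (hG' : Differentiable ℝ (deriv G))
    (hG0 : G 0 = 0) (hG'' : ∀ u ∈ Ioo 0 r, deriv (deriv G) u ≤ α ^ 2 * G u) :
    deriv G r * sinh (α * r) ≤ α * G r * cosh (α * r) := by
  set W : ℝ → ℝ := fun x => deriv G x * sinh (α * x) - α * G x * cosh (α * x)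
  have hW : ∀ u, HasDerivAt W ((deriv (deriv G) u - α ^ 2 * G u) * sinh (α * u)) u :=
    fun u => hasDerivAt_sinh_wronskian (hG u).hasDerivAt (hG' u).hasDerivAt
  have hW_anti : AntitoneOn W (Icc 0 r) := by
    refine antitoneOn_of_deriv_nonpos (convex_Icc 0 r)
      (fun u _ => (hW u).continuousAt.continuousWithinAt)
      (fun u _ => (hW u).differentiableAt.differentiableWithinAt) fun u hu => ?_
    rw [interior_Icc] at hu
    rw [(hW u).deriv]
    exact mul_nonpos_of_nonpos_of_nonneg (sub_nonpos.mpr (hG'' u hu))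
      (sinh_nonneg_iff.mpr (mul_nonneg hα hu.1.le))
  have hW0 : W 0 = 0 := by simp [W, hG0]
  have hWr : W r ≤ 0 := hW0 ▸ hW_anti ⟨le_rfl, hr⟩ ⟨hr, le_rfl⟩ hr
  exact sub_nonpos.mp hWr

theorem deriv_div_le_mul_coth_of_deriv_deriv_le {G : ℝ → ℝ} {α r : ℝ} (hα : 0 < α)
    (hr : 0 < r) (hG : Differentiable ℝ G) (hG' : Differentiable ℝ (deriv G))
    (hG0 : G 0 = 0) (hG'' : ∀ u ∈ Ioo 0 r, deriv (deriv G) u ≤ α ^ 2 * G u)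
    (hGr : 0 < G r) :
    deriv G r / G r ≤ α * (cosh (α * r) / sinh (α * r)) := by
  have hsinh : 0 < sinh (α * r) := sinh_pos_iff.mpr (mul_pos hα hr)
  rw [div_le_iff₀ hGr, mul_div_assoc', div_mul_eq_mul_div, le_div_iff₀ hsinh]
  linarith [deriv_mul_sinh_le_of_deriv_deriv_le hα.le hr.le hG hG' hG0 hG'']

theorem jacobi_comparison_coth_bound_general
    (m : ℕ) (hm : 2 ≤ m) (L K : ℝ) (hK : 0 < K)
    (q G : ℝ → ℝ)
    (hqK : ∀ u ∈ Set.Icc (0:ℝ) L, -(K / ((m:ℝ) - 1)) ≤ q u)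
    (hGsmooth : ContDiff ℝ 2 G)
    (hG0 : G 0 = 0)
    (hODE : ∀ u ∈ Set.Icc (0:ℝ) L, deriv (deriv G) u = -(q u) * G u)
    (hGpos : ∀ u ∈ Set.Ioc (0:ℝ) L, 0 < G u) :
    ∀ r ∈ Set.Ioc (0:ℝ) L,
      ((m:ℝ) - 1) * deriv G r / G r ≤
        ((m:ℝ) - 1) * Real.sqrt (K / ((m:ℝ) - 1)) *
          (Real.cosh (Real.sqrt (K / ((m:ℝ) - 1)) * r) /
            Real.sinh (Real.sqrt (K / ((m:ℝ) - 1)) * r)) := by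
  intro r hr
  have hm1 : (0:ℝ) < m - 1 := by
    have : (2:ℝ) ≤ m := by exact_mod_cast hm
    linarith
  have hKm : 0 < K / ((m:ℝ) - 1) := div_pos hK hm1
  have hG'' : ∀ u ∈ Ioo 0 r, deriv (deriv G) u ≤ √(K / ((m:ℝ) - 1)) ^ 2 * G u := by
    intro u hu
    have hu' : u ∈ Icc 0 L := ⟨hu.1.le, hu.2.le.trans hr.2⟩
    rw [hODE u hu', sq_sqrt hKm.le]
    nlinarith [hqK u hu', hGpos u ⟨hu.1, hu'.2⟩]
  rw [mul_div_assoc, mul_assoc]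
  exact mul_le_mul_of_nonneg_left
    (deriv_div_le_mul_coth_of_deriv_deriv_le (sqrt_pos.mpr hKm) hr.1
      (hGsmooth.differentiable two_ne_zero) hGsmooth.differentiable_deriv_two hG0 hG''
      (hGpos r hr)) hm1.le

/-- Sturm comparison: lower Ricci bound `q ≥ -K/(m-1)` gives the `coth` upper bound
on `(m-1) G'/G` for the Jacobi comparison ODE. -/
theorem jacobi_comparison_coth_bound
    (m : ℕ) (hm : 2 ≤ m) (L K : ℝ) (hL : 0 < L) (hK : 0 < K)
    (q G : ℝ → ℝ) (hq : ContinuousOn q (Set.Icc 0 L))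
    (hqK : ∀ u ∈ Set.Icc (0:ℝ) L, -(K / ((m:ℝ) - 1)) ≤ q u)
    (hGsmooth : ContDiff ℝ 2 G)
    (hG0 : G 0 = 0) (hG'0 : deriv G 0 = 1)
    (hODE : ∀ u ∈ Set.Icc (0:ℝ) L, deriv (deriv G) u = -(q u) * G u)
    (hGpos : ∀ u ∈ Set.Ioc (0:ℝ) L, 0 < G u) :
    ∀ r ∈ Set.Ioc (0:ℝ) L,
      ((m:ℝ) - 1) * deriv G r / G r ≤
        ((m:ℝ) - 1) * Real.sqrt (K / ((m:ℝ) - 1)) *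
          (Real.cosh (Real.sqrt (K / ((m:ℝ) - 1)) * r) /
            Real.sinh (Real.sqrt (K / ((m:ℝ) - 1)) * r)) :=
  jacobi_comparison_coth_bound_general m hm L K hK q G hqK hGsmooth hG0 hODE hGpos
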